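/- arXiv:1506.03943 — 3 statements merged into one kernel-verified Lean document; each statement's English description precedes it below -/
import Mathlib

section
/- Let > be an admissible type ordering, ⊐ the transitive closure of > ∪ ⊳_l, and A a sort. If T > U and every sort occurring in T is ⊑ A, then every sort occurring in U is ⊑ A. -/
inductive Ty (S : Type*) : Type _
  | sort (A : S) : Ty S
  | arrow (T U : Ty S) : Ty S

/-- Left subterm relation: `T→U ⊳_l T`. -/
def Ty.leftSub {S : Type*} (a b : Ty S) : Prop := ∃ U, a = Ty.arrow b U

/-- A sort `B` occurs in a type. -/
def Ty.occurs {S : Type*} (B : S) : Ty S → Prop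
  | .sort A => A = B
  | .arrow T U => T.occurs B ∨ U.occurs B

theorem sorts_le_preserved {S : Type*} (gt : Ty S → Ty S → Prop)
    (hirrefl : ∀ T, ¬ gt T T)
    (htrans : ∀ a b c, gt a b → gt b c → gt a c)
    (hright : ∀ T U, gt (Ty.arrow T U) U)
    (hsn : WellFounded (fun a b : Ty S =>
      Relation.TransGen (fun x y => gt x y ∨ Ty.leftSub x y) b a))
    (harrow : ∀ T U V, gt (Ty.arrow T U) V →
      (gt U V ∨ U = V) ∨ ∃ U', V = Ty.arrow T U' ∧ gt U U') :
    ∀ (A : S) (T U : Ty S), gt T U →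
      (∀ B : S, T.occurs B →
        Relation.TransGen (fun x y => gt x y ∨ Ty.leftSub x y)
          (Ty.sort A) (Ty.sort B) ∨ B = A) →
      (∀ C : S, U.occurs C →
        Relation.TransGen (fun x y => gt x y ∨ Ty.leftSub x y)
          (Ty.sort A) (Ty.sort C) ∨ C = A) := by
  intro A
  have occ : ∀ (V : Ty S) (C : S), V.occurs C → V = Ty.sort C ∨
      Relation.TransGen (fun x y => gt x y ∨ Ty.leftSub x y) V (Ty.sort C) := by
    intro V
    induction V with
    | sort B => intro C h; left; cases h; rfl
    | arrow T U ihT ihU =>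
      intro C h; right
      cases h with
      | inl h =>
        have step : (gt (Ty.arrow T U) T ∨ Ty.leftSub (Ty.arrow T U) T) := Or.inr ⟨U, rfl⟩
        rcases ihT C h with h' | h'
        · exact h' ▸ Relation.TransGen.single step
        · exact Relation.TransGen.head step h'
      | inr h =>
        have step : (gt (Ty.arrow T U) U ∨ Ty.leftSub (Ty.arrow T U) U) := Or.inl (hright T U)
        rcases ihU C h with h' | h'
        · exact h' ▸ Relation.TransGen.single step
        · exact Relation.TransGen.head step h'
  intro T
  induction T using WellFounded.induction hsn with
  | _ T ih =>
  intro U hTU hT C hC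
  cases T with
  | sort B =>
    have hB := hT B rfl
    rcases occ U C hC with rfl | hUC
    · rcases hB with hB | rfl
      · exact Or.inl (hB.tail (Or.inl hTU))
      · exact Or.inl (Relation.TransGen.single (Or.inl hTU))
    · rcases hB with hB | rfl
      · exact Or.inl (hB.trans (Relation.TransGen.head (Or.inl hTU) hUC))
      · exact Or.inl (Relation.TransGen.head (Or.inl hTU) hUC)
  | arrow T1 T2 =>
    have hT2small : Relation.TransGen (fun x y => gt x y ∨ Ty.leftSub x y) (Ty.arrow T1 T2) T2 :=
      Relation.TransGen.single (Or.inl (hright T1 T2))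
    rcases harrow T1 T2 U hTU with (h | rfl) | ⟨U', rfl, hU'⟩
    · exact ih T2 hT2small U h (fun B hB => hT B (Or.inr hB)) C hC
    · exact hT C (Or.inr hC)
    · cases hC with
      | inl h => exact hT C (Or.inl h)
      | inr h => exact ih T2 hT2small U' hU' (fun B hB => hT B (Or.inr hB)) C h
end

section
/- Given a well-founded ordering >_S on sorts, define > as the smallest ordering on simple types containing >_S and the right-subterm relation (T→U > U), and closed under: V > V' implies U→V > U→V'. Then > satisfies the condition (typ-arrow): if T→U > V, then U ≥ V, or V = T→U' with U > U'. -/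
/-- The smallest ordering on types containing the sort ordering `gtS`
and the right-subterm relation, monotone in the right argument of arrows,
and transitive. -/
inductive TyGt {S : Type*} (gtS : S → S → Prop) : Ty S → Ty S → Prop
  | sort {A B : S} : gtS A B → TyGt gtS (Ty.sort A) (Ty.sort B)
  | rsub (T U : Ty S) : TyGt gtS (Ty.arrow T U) U
  | mono {V V' : Ty S} (U : Ty S) : TyGt gtS V V' →
      TyGt gtS (Ty.arrow U V) (Ty.arrow U V')
  | trans {a b c : Ty S} : TyGt gtS a b → TyGt gtS b c → TyGt gtS a c

theorem tyGt_typ_arrow {S : Type*} (gtS : S → S → Prop)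
    (hwf : WellFounded (fun a b : S => gtS b a)) :
    ∀ T U V : Ty S, TyGt gtS (Ty.arrow T U) V →
      (TyGt gtS U V ∨ U = V) ∨ ∃ U', V = Ty.arrow T U' ∧ TyGt gtS U U' := by
  have key : ∀ a V, TyGt gtS a V → ∀ T U, a = Ty.arrow T U →
      (TyGt gtS U V ∨ U = V) ∨ ∃ U', V = Ty.arrow T U' ∧ TyGt gtS U U' := by
    intro a V h
    induction h with
    | sort h => intro T U he; cases he
    | rsub T' U' => intro T U he; cases he; exact Or.inl (Or.inr rfl)
    | mono U' h ih => intro T U he; cases he; exact Or.inr ⟨_, rfl, h⟩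
    | @trans a b c h1 h2 ih1 ih2 =>
      intro T U he; subst he
      rcases ih1 T U rfl with (h' | rfl) | ⟨U', rfl, hU⟩
      · exact Or.inl (Or.inl (TyGt.trans h' h2))
      · exact Or.inl (Or.inl h2)
      · rcases ih2 T U' rfl with (h' | rfl) | ⟨U'', rfl, hU'⟩
        · exact Or.inl (Or.inl (TyGt.trans hU h'))
        · exact Or.inl (Or.inl hU)
        · exact Or.inr ⟨U'', rfl, TyGt.trans hU hU'⟩
  exact fun T U V h => key _ V h T U rfl
end

section
/- Given a well-founded ordering >_S on sorts, the smallest ordering > on simple types containing >_S and the right-subterm relation, and monotone in the right argument of arrows, has the property that the transitive closure of > ∪ ⊳_l is well-founded (where ⊳_l is the left-subterm relation T→U ⊳_l T). -/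
/-!
Interpret a type as an ordinal: a sort `A` by its rank `rk A` in the well-founded order `>_S`,
and `T → U` by `rank T + rank U + 1`.
Ordinal addition is strictly monotone in its right argument, so every generating case of `>`
decreases the interpretation, and so does `⊳_l`; hence `(> ∪ ⊳_l)⁺` embeds into `<` on ordinals.
-/

namespace Ty

variable {S : Type*} (rk : S → Ordinal)

noncomputable def rank : Ty S → Ordinal
  | sort A => rk A
  | arrow T U => T.rank + U.rank + 1

variable {rk}

theorem rank_lt_rank_arrow_left (T U : Ty S) : T.rank rk < (arrow T U).rank rk :=
  Order.lt_add_one_iff.2 le_self_add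

theorem rank_lt_rank_arrow_right (T U : Ty S) : U.rank rk < (arrow T U).rank rk :=
  Order.lt_add_one_iff.2 le_add_self

theorem rank_arrow_lt_rank_arrow (U : Ty S) {V V' : Ty S} (h : V'.rank rk < V.rank rk) :
    (arrow U V').rank rk < (arrow U V).rank rk :=
  Order.lt_add_one_iff.2 (Order.add_one_le_of_lt ((add_lt_add_iff_left _).2 h))

theorem rank_lt_of_leftSub {x y : Ty S} (h : leftSub x y) : y.rank rk < x.rank rk := by
  obtain ⟨U, rfl⟩ := h
  exact rank_lt_rank_arrow_left y U

end Ty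

theorem TyGt.rank_lt {S : Type*} {gtS : S → S → Prop} {rk : S → Ordinal}
    (hrk : ∀ ⦃A B⦄, gtS A B → rk B < rk A) {x y : Ty S} (h : TyGt gtS x y) :
    y.rank rk < x.rank rk := by
  induction h with
  | sort hAB => exact hrk hAB
  | rsub T U => exact Ty.rank_lt_rank_arrow_right T U
  | mono U _ ih => exact Ty.rank_arrow_lt_rank_arrow U ih
  | trans _ _ ih₁ ih₂ => exact ih₂.trans ih₁

theorem tyGt_typ_sn {S : Type*} (gtS : S → S → Prop)
    (hwf : WellFounded (fun a b : S => gtS b a)) :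
    WellFounded (fun a b : Ty S =>
      Relation.TransGen (fun x y => TyGt gtS x y ∨ Ty.leftSub x y) b a) := by
  let rk : S → Ordinal := fun A => (hwf.apply A).rank
  have hrk ⦃A B : S⦄ (h : gtS A B) : rk B < rk A := Acc.rank_lt_of_rel (hwf.apply A) h
  have hstep : WellFounded (fun a b : Ty S => TyGt gtS b a ∨ Ty.leftSub b a) :=
    Subrelation.wf
      (fun h => h.elim (TyGt.rank_lt hrk) Ty.rank_lt_of_leftSub)
      (InvImage.wf (Ty.rank rk) wellFounded_lt)
  exact Subrelation.wf Relation.transGen_swap.2 hstep.transGen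
end
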